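/- Let N ≥ 1 and let x, x' : ZMod N → ℂ. Define y_j = |x_j|², z_k = |x̂[k]|² and similarly y', z' from x'. Assume ŷ[k] ≠ 0 and ẑ[k] ≠ 0 for all k ∈ ZMod N. If B^M(x')(i,j) = B^M(x)(i,j) and B^{FM}(x')(i,j) = B^{FM}(x)(i,j) for all i, j ∈ ZMod N, then there exist k₀, n₀ ∈ ZMod N such that |x'_j| = |x_{j+k₀}| for all j and |x̂'[k]| = |x̂[k+n₀]| for all k. That is, the Heisenberg bispectrum determines the magnitude vector and the Fourier-magnitude vector each up to a cyclic shift. -/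

import Mathlib

open ZMod

/-- The modulus bispectrum `B^M(x)(i,j) = ŷ[i]·ŷ[j]·ŷ[-i-j]` where `y_t = |x_t|²`. -/
noncomputable def modulusBispectrum {N : ℕ} [NeZero N] (x : ZMod N → ℂ) (i j : ZMod N) : ℂ :=
  dft (fun t => ((‖x t‖ : ℂ)) ^ 2) i *
    dft (fun t => ((‖x t‖ : ℂ)) ^ 2) j *
    dft (fun t => ((‖x t‖ : ℂ)) ^ 2) (-i - j)

/-- The Fourier-modulus bispectrum `B^{FM}(x)(i,j) = ẑ[i]·ẑ[j]·ẑ[-i-j]` where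
`z_t = |x̂[t]|²`. -/
noncomputable def fourierModulusBispectrum {N : ℕ} [NeZero N] (x : ZMod N → ℂ)
    (i j : ZMod N) : ℂ :=
  dft (fun t => ((‖dft x t‖ : ℂ)) ^ 2) i *
    dft (fun t => ((‖dft x t‖ : ℂ)) ^ 2) j *
    dft (fun t => ((‖dft x t‖ : ℂ)) ^ 2) (-i - j)

/-!
If `f` and `f'` have the same bispectrum and `dft f` never vanishes, the ratio `φ = dft f' / dft f`
satisfies `φ i * φ j * φ (-i - j) = 1`. For real signals `φ 0` is a real cube root of unity, hence
`1`, and then `φ` is an additive character of `ZMod N`, i.e. `φ k = e(k₀ k)`; by the shift rule of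
the DFT, `f'` is the translate of `f` by `k₀`. Apply this to `|x|²` and to `|dft x|²`.
-/
def AddChar.ofMulMulNegSubEqOne {G M : Type*} [AddCommGroup G] [CommMonoid M] (φ : G → M)
    (h0 : φ 0 = 1) (h : ∀ i j, φ i * φ j * φ (-i - j) = 1) : AddChar G M where
  toFun := φ
  map_zero_eq_one' := h0
  map_add_eq_mul' i j := by
    have hinv : φ (i + j) * φ (-(i + j)) = 1 := by simpa [h0] using h (i + j) 0
    calc φ (i + j) = φ (i + j) * (φ i * φ j * φ (-i - j)) := by rw [h, mul_one]
      _ = φ i * φ j * (φ (i + j) * φ (-(i + j))) := by rw [neg_add']; ac_rfl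
      _ = φ i * φ j := by rw [hinv, mul_one]

namespace ZMod

variable {N : ℕ} [NeZero N]

noncomputable def bispectrum (f : ZMod N → ℂ) (i j : ZMod N) : ℂ :=
  dft f i * dft f j * dft f (-i - j)

theorem exists_eq_stdAddChar_mulShift (ψ : AddChar (ZMod N) ℂ) :
    ∃ a, stdAddChar.mulShift a = ψ :=
  ((Fintype.bijective_iff_injective_and_card _).2
    ⟨AddChar.to_mulShift_inj_of_isPrimitive (isPrimitive_stdAddChar N),
      AddChar.card_eq.symm⟩).surjective ψ

theorem dft_comp_add_right {E : Type*} [AddCommGroup E] [Module ℂ E] (Φ : ZMod N → E)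
    (a k : ZMod N) : dft (fun j ↦ Φ (j + a)) k = stdAddChar (a * k) • dft Φ k := by
  rw [dft_apply, dft_apply, Finset.smul_sum]
  refine Fintype.sum_equiv (Equiv.addRight a) _ _ fun j ↦ ?_
  rw [Equiv.coe_addRight, smul_smul, ← AddChar.map_add_eq_mul]
  ring_nf

theorem exists_eq_comp_add_of_bispectrum_eq {f f' : ZMod N → ℂ} (hf : ∀ k, dft f k ≠ 0)
    (h0 : dft f' 0 = dft f 0) (hB : ∀ i j, bispectrum f' i j = bispectrum f i j) :
    ∃ k₀, ∀ j, f' j = f (j + k₀) := by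
  set φ : ZMod N → ℂ := fun k ↦ dft f' k / dft f k
  have hφ0 : φ 0 = 1 := by simp only [φ, h0, div_self (hf 0)]
  have hφ (i j : ZMod N) : φ i * φ j * φ (-i - j) = 1 := by
    simp only [φ, div_mul_div_comm]
    exact (div_eq_one_iff_eq (mul_ne_zero (mul_ne_zero (hf i) (hf j)) (hf _))).2 (hB i j)
  obtain ⟨k₀, hk₀⟩ := exists_eq_stdAddChar_mulShift (AddChar.ofMulMulNegSubEqOne φ hφ0 hφ)
  refine ⟨k₀, congr_fun (dft.injective (funext fun k ↦ ?_))⟩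
  have hφk : φ k = stdAddChar (k₀ * k) := congr($hk₀.symm k)
  rw [dft_comp_add_right, ← hφk, smul_eq_mul, div_mul_cancel₀ _ (hf k)]

theorem exists_norm_eq_comp_add_of_bispectrum_eq {g g' : ZMod N → ℂ}
    (hg : ∀ k, dft (fun t ↦ (‖g t‖ : ℂ) ^ 2) k ≠ 0)
    (hB : ∀ i j, bispectrum (fun t ↦ (‖g' t‖ : ℂ) ^ 2) i j =
      bispectrum (fun t ↦ (‖g t‖ : ℂ) ^ 2) i j) :
    ∃ k₀, ∀ j, ‖g' j‖ = ‖g (j + k₀)‖ := by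
  have hsum (h : ZMod N → ℂ) :
      dft (fun t ↦ (‖h t‖ : ℂ) ^ 2) 0 = ((∑ t, ‖h t‖ ^ 2 : ℝ) : ℂ) := by
    push_cast [dft_apply_zero]; rfl
  have h0 : dft (fun t ↦ (‖g' t‖ : ℂ) ^ 2) 0 = dft (fun t ↦ (‖g t‖ : ℂ) ^ 2) 0 := by
    have h := hB 0 0
    simp only [bispectrum, neg_zero, sub_zero, hsum] at h
    norm_cast at h
    rw [hsum, hsum, Complex.ofReal_inj]
    exact (Odd.pow_inj (n := 3) (by decide)).1 (by linear_combination h)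
  obtain ⟨k₀, hk₀⟩ := exists_eq_comp_add_of_bispectrum_eq hg h0 hB
  refine ⟨k₀, fun j ↦ ?_⟩
  have h := hk₀ j
  norm_cast at h
  exact (sq_eq_sq₀ (norm_nonneg _) (norm_nonneg _)).1 h

end ZMod

/-- **The Heisenberg bispectrum determines the magnitudes and Fourier magnitudes, each up
to cyclic shift.** If `ŷ` and `ẑ` (the DFTs of the squared magnitudes and squared Fourier
magnitudes of `x`) are everywhere nonzero, and `x'` has the same modulus and
Fourier-modulus bispectra as `x`, then `|x'_j| = |x_{j+k₀}|` and `|x̂'[k]| = |x̂[k+n₀]|`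
for some shifts `k₀, n₀`. -/
theorem heisenberg_bispectrum_separates_up_to_shift
    {N : ℕ} [NeZero N] (x x' : ZMod N → ℂ)
    (hy : ∀ k : ZMod N, dft (fun t => ((‖x t‖ : ℂ)) ^ 2) k ≠ 0)
    (hz : ∀ k : ZMod N, dft (fun t => ((‖dft x t‖ : ℂ)) ^ 2) k ≠ 0)
    (hBM : ∀ i j : ZMod N, modulusBispectrum x' i j = modulusBispectrum x i j)
    (hBFM : ∀ i j : ZMod N, fourierModulusBispectrum x' i j = fourierModulusBispectrum x i j) :
    ∃ k₀ n₀ : ZMod N,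
      (∀ j : ZMod N, ‖x' j‖ = ‖x (j + k₀)‖) ∧
      (∀ k : ZMod N, ‖dft x' k‖ = ‖dft x (k + n₀)‖) := by
  obtain ⟨k₀, hk₀⟩ := exists_norm_eq_comp_add_of_bispectrum_eq hy hBM
  obtain ⟨n₀, hn₀⟩ := exists_norm_eq_comp_add_of_bispectrum_eq hz hBFM
  exact ⟨k₀, n₀, hk₀, hn₀⟩
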